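/- arXiv:1710.08552 — 4 statements merged into one kernel-verified Lean document; each statement's English description precedes it below -/
import Mathlib

section
/- Let 1 < α < 2 and d ≥ 2. There exists a constant c > 0, depending only on α and d, such that for all ξ, σ ∈ ℝ^d with ξ ≠ 0 and σ ≠ 0, one has ‖ ‖ξ‖^(α−2)·ξ − ‖σ‖^(α−2)·σ ‖ ≥ c · min( ‖σ‖^(α−1), ‖ξ−σ‖ · ‖σ‖^(α−2) ). -/
open scoped RealInnerProductSpace

/-!
Write `β = α - 1 ∈ (0, 1)`, `F x = ‖x‖ ^ (β - 1) • x`, `a = ‖x‖`, `b = ‖y‖`. Splitting into radial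
and angular parts,
`‖F x - F y‖² = (a ^ β - b ^ β)² + 2 a ^ (β - 1) b ^ (β - 1) (a b - ⟪x, y⟫)`,
`‖x - y‖² = (a - b)² + 2 (a b - ⟪x, y⟫)`.
If `a ≤ 2 b`, then `a ^ (β - 1) ≥ b ^ (β - 1) / 2`, and the tangent-line bound for the concave
function `r ↦ r ^ β` gives `|a ^ β - b ^ β| ≥ β b ^ (β - 1) |a - b| / 2`; comparing term by term
yields `‖F x - F y‖ ≥ β / 2 · b ^ (β - 1) ‖x - y‖`. If `a ≥ 2 b`, the radial part alone suffices:
`‖F x - F y‖ ≥ a ^ β - b ^ β ≥ β / 2 · b ^ β`.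
-/

namespace Real

theorem rpow_le_rpow_add_mul_rpow_sub_one_mul_sub {β a b : ℝ} (hβ₀ : 0 ≤ β) (hβ₁ : β ≤ 1)
    (ha : 0 < a) (hb : 0 ≤ b) : b ^ β ≤ a ^ β + β * a ^ (β - 1) * (b - a) := by
  have bernoulli : (b / a) ^ β ≤ 1 + β * (b / a - 1) := by
    simpa using rpow_one_add_le_one_add_mul_self (s := b / a - 1) (by
      linarith [div_nonneg hb ha.le]) hβ₀ hβ₁
  have haβ : a ^ β = a ^ (β - 1) * a := by
    rw [← rpow_add_one ha.ne', sub_add_cancel]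
  rw [div_rpow hb ha.le, div_le_iff₀ (rpow_pos_of_pos ha β)] at bernoulli
  calc b ^ β ≤ (1 + β * (b / a - 1)) * a ^ β := bernoulli
    _ = a ^ β + β * a ^ (β - 1) * (b - a) := by rw [haβ]; field_simp

theorem mul_mul_abs_sub_le_abs_rpow_sub_rpow {β a b m : ℝ} (hβ₀ : 0 ≤ β) (hβ₁ : β ≤ 1)
    (ha : 0 < a) (hb : 0 < b) (hma : m ≤ a ^ (β - 1)) (hmb : m ≤ b ^ (β - 1)) :
    β * m * |a - b| ≤ |a ^ β - b ^ β| := by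
  rcases le_total b a with hba | hab
  · have := rpow_le_rpow_add_mul_rpow_sub_one_mul_sub hβ₀ hβ₁ ha hb.le
    rw [abs_of_nonneg (sub_nonneg.2 hba),
      abs_of_nonneg (sub_nonneg.2 (rpow_le_rpow hb.le hba hβ₀))]
    nlinarith [mul_le_mul_of_nonneg_left hma hβ₀, sub_nonneg.2 hba]
  · have := rpow_le_rpow_add_mul_rpow_sub_one_mul_sub hβ₀ hβ₁ hb ha.le
    rw [abs_of_nonpos (sub_nonpos.2 hab),
      abs_of_nonpos (sub_nonpos.2 (rpow_le_rpow ha.le hab hβ₀))]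
    nlinarith [mul_le_mul_of_nonneg_left hmb hβ₀, sub_nonneg.2 hab]

theorem half_rpow_sub_one_le_rpow_sub_one {β a b : ℝ} (hβ₀ : 0 ≤ β) (hβ₁ : β ≤ 1)
    (ha : 0 < a) (hb : 0 ≤ b) (hab : a ≤ 2 * b) : b ^ (β - 1) / 2 ≤ a ^ (β - 1) := by
  have two_rpow : (2 : ℝ)⁻¹ ≤ 2 ^ (β - 1) := by
    rw [← rpow_neg_one]; exact rpow_le_rpow_of_exponent_le one_le_two (by linarith)
  calc b ^ (β - 1) / 2 ≤ 2 ^ (β - 1) * b ^ (β - 1) := by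
        rw [div_eq_inv_mul]; gcongr
    _ = (2 * b) ^ (β - 1) := (mul_rpow zero_le_two hb).symm
    _ ≤ a ^ (β - 1) := rpow_le_rpow_of_nonpos ha hab (by linarith)

end Real

section InnerProductSpace

variable {E : Type*} [NormedAddCommGroup E] [InnerProductSpace ℝ E] {β : ℝ} {x y : E}

theorem norm_smul_sub_smul_sq (s t : ℝ) (x y : E) :
    ‖s • x - t • y‖ ^ 2 = (s * ‖x‖ - t * ‖y‖) ^ 2 + 2 * (s * t) * (‖x‖ * ‖y‖ - ⟪x, y⟫) := by
  rw [norm_sub_sq_real, norm_smul, norm_smul, real_inner_smul_left, real_inner_smul_right,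
    Real.norm_eq_abs, Real.norm_eq_abs]
  ring_nf
  rw [sq_abs, sq_abs]
  ring

theorem norm_rpow_smul_self (hx : x ≠ 0) :
    ‖‖x‖ ^ (β - 1) • x‖ = ‖x‖ ^ β := by
  have hx' := norm_pos_iff.2 hx
  rw [norm_smul, Real.norm_of_nonneg (by positivity), ← Real.rpow_add_one hx'.ne', sub_add_cancel]

theorem mul_norm_rpow_le_norm_rpow_smul_sub_of_two_mul_le (hβ₀ : 0 ≤ β) (hβ₁ : β ≤ 1)
    (hx : x ≠ 0) (hy : y ≠ 0) (hxy : 2 * ‖y‖ ≤ ‖x‖) :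
    β / 2 * ‖y‖ ^ β ≤ ‖‖x‖ ^ (β - 1) • x - ‖y‖ ^ (β - 1) • y‖ := by
  have hx' := norm_pos_iff.2 hx
  have hy' := norm_pos_iff.2 hy
  have tangent := Real.rpow_le_rpow_add_mul_rpow_sub_one_mul_sub hβ₀ hβ₁ hx' hy'.le
  have hxβ : ‖x‖ ^ β = ‖x‖ ^ (β - 1) * ‖x‖ := by
    rw [← Real.rpow_add_one hx'.ne', sub_add_cancel]
  have mono : ‖y‖ ^ β ≤ ‖x‖ ^ β := Real.rpow_le_rpow hy'.le (by linarith) hβ₀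
  calc β / 2 * ‖y‖ ^ β ≤ ‖x‖ ^ β - ‖y‖ ^ β := by
        nlinarith [mul_nonneg hβ₀ (Real.rpow_nonneg hx'.le (β - 1))]
    _ = ‖‖x‖ ^ (β - 1) • x‖ - ‖‖y‖ ^ (β - 1) • y‖ := by
        rw [norm_rpow_smul_self hx, norm_rpow_smul_self hy]
    _ ≤ _ := norm_sub_norm_le _ _

theorem mul_norm_sub_mul_rpow_le_norm_rpow_smul_sub_of_le_two_mul (hβ₀ : 0 ≤ β) (hβ₁ : β ≤ 1)
    (hx : x ≠ 0) (hy : y ≠ 0) (hxy : ‖x‖ ≤ 2 * ‖y‖) :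
    β / 2 * (‖x - y‖ * ‖y‖ ^ (β - 1)) ≤ ‖‖x‖ ^ (β - 1) • x - ‖y‖ ^ (β - 1) • y‖ := by
  have hx' := norm_pos_iff.2 hx
  have hy' := norm_pos_iff.2 hy
  set s := ‖x‖ ^ (β - 1)
  set t := ‖y‖ ^ (β - 1)
  have ht : 0 < t := Real.rpow_pos_of_pos hy' _
  have hts : t / 2 ≤ s := Real.half_rpow_sub_one_le_rpow_sub_one hβ₀ hβ₁ hx' hy'.le hxy
  have radial : β * (t / 2) * |‖x‖ - ‖y‖| ≤ |‖x‖ ^ β - ‖y‖ ^ β| :=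
    Real.mul_mul_abs_sub_le_abs_rpow_sub_rpow hβ₀ hβ₁ hx' hy' hts (by linarith)
  have hsx : s * ‖x‖ = ‖x‖ ^ β := by rw [← Real.rpow_add_one hx'.ne', sub_add_cancel]
  have hty : t * ‖y‖ = ‖y‖ ^ β := by rw [← Real.rpow_add_one hy'.ne', sub_add_cancel]
  have angular : 0 ≤ ‖x‖ * ‖y‖ - ⟪x, y⟫ := sub_nonneg.2 (real_inner_le_norm x y)
  have hdiff := norm_smul_sub_smul_sq 1 1 x y
  simp only [one_smul, one_mul, mul_one] at hdiff
  refine le_of_pow_le_pow_left₀ two_ne_zero (norm_nonneg _) ?_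
  rw [norm_smul_sub_smul_sq, hsx, hty, mul_pow, mul_pow, hdiff, ← sq_abs (‖x‖ ^ β - ‖y‖ ^ β)]
  have radial_sq := pow_le_pow_left₀ (by positivity) radial 2
  rw [mul_pow, sq_abs] at radial_sq
  have hβsq : β ^ 2 ≤ 1 := by nlinarith
  nlinarith [mul_le_mul_of_nonneg_right hts (mul_nonneg ht.le angular),
    mul_nonneg (mul_nonneg (sub_nonneg.2 hβsq) (sq_nonneg t)) angular]

theorem mul_min_le_norm_rpow_smul_sub (hβ₀ : 0 ≤ β) (hβ₁ : β ≤ 1) (hx : x ≠ 0) (hy : y ≠ 0) :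
    β / 2 * min (‖y‖ ^ β) (‖x - y‖ * ‖y‖ ^ (β - 1)) ≤
      ‖‖x‖ ^ (β - 1) • x - ‖y‖ ^ (β - 1) • y‖ := by
  have hβ : 0 ≤ β / 2 := by positivity
  rcases le_total (2 * ‖y‖) ‖x‖ with far | near
  · exact (mul_le_mul_of_nonneg_left (min_le_left _ _) hβ).trans
      (mul_norm_rpow_le_norm_rpow_smul_sub_of_two_mul_le hβ₀ hβ₁ hx hy far)
  · exact (mul_le_mul_of_nonneg_left (min_le_right _ _) hβ).trans
      (mul_norm_sub_mul_rpow_le_norm_rpow_smul_sub_of_le_two_mul hβ₀ hβ₁ hx hy near)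

end InnerProductSpace

theorem stmt_0_general (α : ℝ) (hα₁ : 1 < α) (hα₂ : α < 2) (d : ℕ) :
    ∃ c : ℝ, 0 < c ∧
      ∀ ξ σ : EuclideanSpace ℝ (Fin d), ξ ≠ 0 → σ ≠ 0 →
        c * min (‖σ‖ ^ (α - 1)) (‖ξ - σ‖ * ‖σ‖ ^ (α - 2)) ≤
          ‖(‖ξ‖ ^ (α - 2)) • ξ - (‖σ‖ ^ (α - 2)) • σ‖ := by
  refine ⟨(α - 1) / 2, by linarith, fun ξ σ hξ hσ => ?_⟩
  have key := mul_min_le_norm_rpow_smul_sub (by linarith) (by linarith : α - 1 ≤ 1) hξ hσ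
  rwa [show α - 1 - 1 = α - 2 by ring] at key

/-- Lemma 6.3: lower bound for the difference of the gradient of the phase. -/
theorem stmt_0 (α : ℝ) (hα₁ : 1 < α) (hα₂ : α < 2) (d : ℕ) (hd : 2 ≤ d) :
    ∃ c : ℝ, 0 < c ∧
      ∀ ξ σ : EuclideanSpace ℝ (Fin d), ξ ≠ 0 → σ ≠ 0 →
        c * min (‖σ‖ ^ (α - 1)) (‖ξ - σ‖ * ‖σ‖ ^ (α - 2)) ≤
          ‖(‖ξ‖ ^ (α - 2)) • ξ - (‖σ‖ ^ (α - 2)) • σ‖ :=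
  stmt_0_general α hα₁ hα₂ d
end

section
/- Let 1 < α < 2 and d ≥ 1. There exists a constant C > 0 depending only on α (and d) such that for all ξ, η ∈ ℝ^d with ξ ≠ 0, | ‖ξ+η‖^α − ‖ξ‖^α − α·‖ξ‖^(α−2)·⟨ξ,η⟩ | ≤ C·‖η‖^α. -/
/-!
Write `‖x‖ ^ α = (‖x‖ ^ 2) ^ (α / 2)`. The inner quantity is exactly quadratic:
`‖ξ + η‖ ^ 2 - ‖ξ‖ ^ 2 = 2 ⟪ξ, η⟫ + ‖η‖ ^ 2`, so the remainder is, up to the term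
`(α / 2) ‖ξ‖ ^ (α - 2) ‖η‖ ^ 2`, the first-order Taylor remainder of the concave function
`t ↦ t ^ (α / 2)` between `‖ξ‖ ^ 2` and `‖ξ + η‖ ^ 2`.
If `2 ‖η‖ ≤ ‖ξ‖`, both points are at least `(‖ξ‖ / 2) ^ 2`, so this remainder is
`O(‖ξ‖ ^ (α - 4) · ‖ξ‖ ^ 2 ‖η‖ ^ 2)`, and `‖ξ‖ ^ (α - 2) ‖η‖ ^ 2 ≤ ‖η‖ ^ α` because `α ≤ 2`.
If `‖ξ‖ < 2 ‖η‖`, every term is at most a multiple of `(3 ‖η‖) ^ α`; for the gradient term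
this uses `α ≥ 1`.
-/

open scoped RealInnerProductSpace
open Real

namespace Real

lemma rpow_le_rpow_add_mul_sub {p x y : ℝ} (hp₀ : 0 ≤ p) (hp₁ : p ≤ 1) (hx : 0 ≤ x)
    (hy : 0 < y) : x ^ p ≤ y ^ p + p * y ^ (p - 1) * (x - y) := by
  have hxy : -1 ≤ x / y - 1 := by linarith [div_nonneg hx hy.le]
  have bernoulli := rpow_one_add_le_one_add_mul_self hxy hp₀ hp₁
  rw [add_sub_cancel, div_rpow hx hy.le, div_le_iff₀ (rpow_pos_of_pos hy p)] at bernoulli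
  rw [rpow_sub_one hy.ne']
  calc x ^ p ≤ (1 + p * (x / y - 1)) * y ^ p := bernoulli
    _ = y ^ p + p * (y ^ p / y) * (x - y) := by field_simp

lemma abs_rpow_sub_rpow_le {β m x y : ℝ} (hβ : β ≤ 0) (hm : 0 < m) (hx : m ≤ x) (hy : m ≤ y) :
    |x ^ β - y ^ β| ≤ |β| * m ^ (β - 1) * |x - y| := by
  have hderiv : ∀ z ∈ Set.Ici m,
      HasDerivWithinAt (fun t : ℝ => t ^ β) (β * z ^ (β - 1)) (Set.Ici m) z := fun z hz =>
    (hasDerivAt_rpow_const (Or.inl (hm.trans_le hz).ne')).hasDerivWithinAt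
  have hbound : ∀ z ∈ Set.Ici m, ‖β * z ^ (β - 1)‖ ≤ |β| * m ^ (β - 1) := fun z hz => by
    rw [norm_mul, norm_eq_abs, norm_of_nonneg (rpow_nonneg (hm.trans_le hz).le _)]
    exact mul_le_mul_of_nonneg_left (rpow_le_rpow_of_nonpos hm hz (by linarith)) (abs_nonneg β)
  simpa only [norm_eq_abs] using
    (convex_Ici m).norm_image_sub_le_of_norm_hasDerivWithin_le hderiv hbound hy hx

lemma abs_rpow_sub_rpow_sub_mul_le {p m x y : ℝ} (hp₀ : 0 ≤ p) (hp₁ : p ≤ 1) (hm : 0 < m)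
    (hx : m ≤ x) (hy : m ≤ y) :
    |x ^ p - y ^ p - p * y ^ (p - 1) * (x - y)| ≤ p * (1 - p) * m ^ (p - 2) * (x - y) ^ 2 := by
  -- Tangent lines of the concave `t ↦ t ^ p` at `y` and at `x` trap the remainder between
  -- `p * (x ^ (p - 1) - y ^ (p - 1)) * (x - y)` and `0`.
  have tangent_at_y := rpow_le_rpow_add_mul_sub hp₀ hp₁ (hm.trans_le hx).le (hm.trans_le hy)
  have tangent_at_x := rpow_le_rpow_add_mul_sub hp₀ hp₁ (hm.trans_le hy).le (hm.trans_le hx)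
  have lipschitz := abs_rpow_sub_rpow_le (by linarith : p - 1 ≤ 0) hm hx hy
  rw [abs_of_nonpos (by linarith : p - 1 ≤ 0), neg_sub, sub_sub, one_add_one_eq_two]
    at lipschitz
  have hgap : |p * (x ^ (p - 1) - y ^ (p - 1)) * (x - y)|
      ≤ p * (1 - p) * m ^ (p - 2) * (x - y) ^ 2 := by
    rw [abs_mul, abs_mul, abs_of_nonneg hp₀, ← sq_abs (x - y)]
    calc p * |x ^ (p - 1) - y ^ (p - 1)| * |x - y|
        ≤ p * ((1 - p) * m ^ (p - 2) * |x - y|) * |x - y| := by gcongr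
      _ = p * (1 - p) * m ^ (p - 2) * |x - y| ^ 2 := by ring
  rw [abs_le]
  constructor <;> nlinarith [neg_abs_le (p * (x ^ (p - 1) - y ^ (p - 1)) * (x - y))]

lemma sq_rpow_div_two {x : ℝ} (hx : 0 ≤ x) (γ : ℝ) : (x ^ 2) ^ (γ / 2) = x ^ γ := by
  rw [← rpow_two, ← rpow_mul hx, mul_div_cancel₀ γ two_ne_zero]

lemma rpow_sub_two_mul_sq_le {α a b : ℝ} (hα : α ≤ 2) (hb : 0 ≤ b) (hba : b ≤ a) :
    a ^ (α - 2) * b ^ 2 ≤ b ^ α := by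
  rcases hb.eq_or_lt with rfl | hb
  · simpa using rpow_nonneg le_rfl α
  calc a ^ (α - 2) * b ^ 2 ≤ b ^ (α - 2) * b ^ 2 :=
        mul_le_mul_of_nonneg_right (rpow_le_rpow_of_nonpos hb hba (by linarith)) (sq_nonneg b)
    _ = b ^ α := by
        rw [show (α - 2) = α - (2 : ℕ) by norm_num, rpow_sub_natCast hb.ne', div_mul_cancel₀]
        positivity

lemma abs_rpow_sub_rpow_sub_mul_sq_sub_sq_le {α a c t : ℝ} (hα₀ : 0 ≤ α) (hα₂ : α ≤ 2)
    (ht : 0 < t) (hta : t ≤ a) (htc : t ≤ c) :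
    |c ^ α - a ^ α - α / 2 * a ^ (α - 2) * (c ^ 2 - a ^ 2)|
      ≤ α / 2 * (1 - α / 2) * t ^ (α - 4) * (c ^ 2 - a ^ 2) ^ 2 := by
  have h := abs_rpow_sub_rpow_sub_mul_le (p := α / 2) (by positivity) (by linarith)
    (pow_pos ht 2) (pow_le_pow_left₀ ht.le htc 2) (pow_le_pow_left₀ ht.le hta 2)
  rwa [show α / 2 - 1 = (α - 2) / 2 by ring, show α / 2 - 2 = (α - 4) / 2 by ring,
    sq_rpow_div_two (ht.le.trans htc), sq_rpow_div_two (ht.le.trans hta),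
    sq_rpow_div_two (ht.le.trans hta), sq_rpow_div_two ht.le] at h

end Real

section TaylorRemainder

variable {E : Type*} [NormedAddCommGroup E] [InnerProductSpace ℝ E] {α : ℝ} {ξ η : E}

lemma abs_norm_add_rpow_sub_le_of_two_mul_norm_le (hα₀ : 0 ≤ α) (hα₂ : α ≤ 2) (hξ : ξ ≠ 0)
    (hη : 2 * ‖η‖ ≤ ‖ξ‖) :
    |‖ξ + η‖ ^ α - ‖ξ‖ ^ α - α * ‖ξ‖ ^ (α - 2) * ⟪ξ, η⟫| ≤ 8 * ‖η‖ ^ α := by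
  set a := ‖ξ‖
  set b := ‖η‖
  set c := ‖ξ + η‖
  set s := ⟪ξ, η⟫
  set t := a / 2 with ht_def
  have ht : 0 < t := half_pos (norm_pos_iff.mpr hξ)
  have hbt : b ≤ t := by linarith
  have htc : t ≤ c := by linarith [norm_sub_le_norm_add ξ η]
  have hsq : c ^ 2 - a ^ 2 = 2 * s + b ^ 2 := by rw [norm_add_sq_real]; ring
  have hs : |s| ≤ 2 * t * b := by
    rw [ht_def, mul_div_cancel₀ a two_ne_zero]; exact abs_real_inner_le_norm ξ η
  have hdiff : (2 * s + b ^ 2) ^ 2 ≤ 25 * (t ^ 2 * b ^ 2) := by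
    have : |2 * s + b ^ 2| ≤ 5 * (t * b) := by
      rw [abs_le] at hs ⊢
      constructor <;> nlinarith [norm_nonneg η]
    rw [← sq_abs]
    nlinarith [abs_nonneg (2 * s + b ^ 2)]
  have hremainder := abs_rpow_sub_rpow_sub_mul_sq_sub_sq_le hα₀ hα₂ ht (show t ≤ a by linarith) htc
  rw [hsq] at hremainder
  have hscale : t ^ (α - 4) * (t ^ 2 * b ^ 2) = t ^ (α - 2) * b ^ 2 := by
    rw [show α - 4 = α - 2 - (2 : ℕ) by push_cast; ring, rpow_sub_natCast ht.ne']
    field_simp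
  have hp : α / 2 * (1 - α / 2) ≤ 1 / 4 := by nlinarith [sq_nonneg (α - 1)]
  have hquadratic : |c ^ α - a ^ α - α / 2 * a ^ (α - 2) * (2 * s + b ^ 2)| ≤ 25 / 4 * b ^ α :=
    calc _ ≤ α / 2 * (1 - α / 2) * t ^ (α - 4) * (2 * s + b ^ 2) ^ 2 := hremainder
      _ ≤ α / 2 * (1 - α / 2) * t ^ (α - 4) * (25 * (t ^ 2 * b ^ 2)) := by
          have : 0 ≤ α / 2 * (1 - α / 2) := mul_nonneg (by positivity) (by linarith)
          gcongr
      _ = 25 * (α / 2 * (1 - α / 2)) * (t ^ (α - 2) * b ^ 2) := by rw [← hscale]; ring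
      _ ≤ 25 * (1 / 4) * b ^ α := by
          gcongr
          exact rpow_sub_two_mul_sq_le hα₂ (norm_nonneg η) hbt
      _ = 25 / 4 * b ^ α := by ring
  have hlinear : α / 2 * a ^ (α - 2) * b ^ 2 ≤ b ^ α :=
    calc _ ≤ 1 * (a ^ (α - 2) * b ^ 2) := by rw [mul_assoc]; gcongr; linarith
      _ ≤ b ^ α := by rw [one_mul]; exact rpow_sub_two_mul_sq_le hα₂ (norm_nonneg η) (by linarith)
  have hsplit : c ^ α - a ^ α - α * a ^ (α - 2) * s = (c ^ α - a ^ α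
      - α / 2 * a ^ (α - 2) * (2 * s + b ^ 2)) + α / 2 * a ^ (α - 2) * b ^ 2 := by ring
  calc _ ≤ 25 / 4 * b ^ α + b ^ α := by
        rw [hsplit]
        refine (abs_add_le _ _).trans (add_le_add hquadratic ?_)
        rwa [abs_of_nonneg (by positivity)]
    _ ≤ 8 * b ^ α := by linarith [rpow_nonneg (norm_nonneg η) α]

lemma abs_norm_add_rpow_sub_le_of_norm_lt_two_mul (hα₁ : 1 ≤ α) (hα₂ : α ≤ 2) (hξ : ξ ≠ 0)
    (hη : ‖ξ‖ < 2 * ‖η‖) :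
    |‖ξ + η‖ ^ α - ‖ξ‖ ^ α - α * ‖ξ‖ ^ (α - 2) * ⟪ξ, η⟫| ≤ 36 * ‖η‖ ^ α := by
  have ha : 0 < ‖ξ‖ := norm_pos_iff.mpr hξ
  set M := 3 * ‖η‖ with hM
  have haM : ‖ξ‖ ≤ M := by linarith
  have hcM : ‖ξ + η‖ ≤ M := by linarith [norm_add_le ξ η]
  have hM₀ : 0 < M := by linarith
  have hgrad : α * ‖ξ‖ ^ (α - 2) * |⟪ξ, η⟫| ≤ 2 * M ^ α :=
    calc _ ≤ α * ‖ξ‖ ^ (α - 2) * (‖ξ‖ * ‖η‖) := by gcongr; exact abs_real_inner_le_norm ξ η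
      _ = α * (‖ξ‖ ^ (α - 1) * ‖η‖) := by
          rw [show α - 1 = α - 2 + 1 by ring, rpow_add_one ha.ne']; ring
      _ ≤ 2 * (M ^ (α - 1) * M) := by gcongr; linarith
      _ = 2 * M ^ α := by rw [← rpow_add_one (by positivity), sub_add_cancel]
  calc _ ≤ ‖ξ + η‖ ^ α + ‖ξ‖ ^ α + α * ‖ξ‖ ^ (α - 2) * |⟪ξ, η⟫| := by
        have hterm : |α * ‖ξ‖ ^ (α - 2) * ⟪ξ, η⟫| = α * ‖ξ‖ ^ (α - 2) * |⟪ξ, η⟫| := by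
          rw [abs_mul, abs_of_nonneg (by positivity)]
        rw [abs_le]
        constructor <;> linarith [abs_le.mp hterm.le, rpow_nonneg (norm_nonneg ξ) α,
          rpow_nonneg (norm_nonneg (ξ + η)) α]
    _ ≤ M ^ α + M ^ α + 2 * M ^ α := by gcongr
    _ = 4 * 3 ^ α * ‖η‖ ^ α := by rw [hM, mul_rpow (by norm_num) (norm_nonneg η)]; ring
    _ ≤ 4 * 3 ^ (2 : ℝ) * ‖η‖ ^ α := by gcongr; norm_num
    _ = 36 * ‖η‖ ^ α := by norm_num

end TaylorRemainder

theorem stmt_3_general (α : ℝ) (hα₁ : 1 < α) (hα₂ : α < 2) (d : ℕ) :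
    ∃ C : ℝ, 0 < C ∧
      ∀ ξ η : EuclideanSpace ℝ (Fin d), ξ ≠ 0 →
        |‖ξ + η‖ ^ α - ‖ξ‖ ^ α - α * ‖ξ‖ ^ (α - 2) * ⟪ξ, η⟫| ≤ C * ‖η‖ ^ α := by
  refine ⟨36, by norm_num, fun ξ η hξ => ?_⟩
  rcases le_or_gt (2 * ‖η‖) ‖ξ‖ with hnear | hfar
  · calc _ ≤ 8 * ‖η‖ ^ α :=
          abs_norm_add_rpow_sub_le_of_two_mul_norm_le (by linarith) hα₂.le hξ hnear
      _ ≤ 36 * ‖η‖ ^ α := by gcongr; norm_num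
  · exact abs_norm_add_rpow_sub_le_of_norm_lt_two_mul hα₁.le hα₂.le hξ hfar

/-- Second-order Taylor remainder bound for `ξ ↦ ‖ξ‖^α`, `1 < α < 2`. -/
theorem stmt_3 (α : ℝ) (hα₁ : 1 < α) (hα₂ : α < 2) (d : ℕ) (hd : 1 ≤ d) :
    ∃ C : ℝ, 0 < C ∧
      ∀ ξ η : EuclideanSpace ℝ (Fin d), ξ ≠ 0 →
        |‖ξ + η‖ ^ α - ‖ξ‖ ^ α - α * ‖ξ‖ ^ (α - 2) * ⟪ξ, η⟫| ≤ C * ‖η‖ ^ α :=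
  stmt_3_general α hα₁ hα₂ d
end

section
/- Let d ≥ 1 and let m : ℝ^d × ℝ^d → ℂ be integrable. Suppose the function K(x,y) := ∫_{ℝ^d×ℝ^d} m(η,σ) e^{i⟨x,η⟩} e^{i⟨y,σ⟩} dη dσ satisfies ∫_{ℝ^d×ℝ^d} |K(x,y)| dx dy ≤ A. Then there is a constant C depending only on d such that for all exponents p, q, r ∈ [1,∞] with 1/p + 1/q + 1/r = 1 and all Schwartz functions f, g, h : ℝ^d → ℂ, | ∫_{ℝ^d×ℝ^d} m(η,σ) · 𝓕f(η) · 𝓕g(σ) · 𝓕h(η+σ) dη dσ | ≤ C · A · ‖f‖_{L^p} ‖g‖_{L^q} ‖h‖_{L^r}. -/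
/-!
Writing out the three Fourier transforms and integrating the multiplier first turns the
trilinear form into `∫ K(u) J(u) du`, where `K` is the kernel of `m` and
`J(u) = ∫ f(-u₁ - z) g(-u₂ - z) h(z) dz`. By translation invariance and Hölder's inequality
for three functions, `|J(u)| ≤ ‖f‖_p ‖g‖_q ‖h‖_r` for every `u`, so the form is bounded by
`‖K‖_{L¹} ‖f‖_p ‖g‖_q ‖h‖_r`: the estimate holds with `C = 1`.
-/

open MeasureTheory
open scoped RealInnerProductSpace ENNReal

/-- Fourier transform with the convention `𝓕f(ξ) = ∫ f(x) e^{-i⟨x,ξ⟩} dx`. -/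
noncomputable def FT {d : ℕ} (f : EuclideanSpace ℝ (Fin d) → ℂ)
    (ξ : EuclideanSpace ℝ (Fin d)) : ℂ :=
  ∫ x, Complex.exp (-(Complex.I * ((⟪x, ξ⟫ : ℝ) : ℂ))) * f x

section Holder

variable {α 𝕜 : Type*} [MeasurableSpace α] {μ : Measure α} [NormedRing 𝕜] [NormedSpace ℝ 𝕜]

theorem enorm_integral_mul_mul_le {p q r : ℝ≥0∞} (hpqr : 1 / p + 1 / q + 1 / r = 1)
    {a b c : α → 𝕜} (ha : AEStronglyMeasurable a μ) (hb : AEStronglyMeasurable b μ)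
    (hc : AEStronglyMeasurable c μ) :
    ‖∫ x, a x * b x * c x ∂μ‖ₑ ≤ eLpNorm a p μ * eLpNorm b q μ * eLpNorm c r μ := by
  have : ENNReal.HolderTriple p q (p⁻¹ + q⁻¹)⁻¹ := .of p q
  have : ENNReal.HolderTriple (p⁻¹ + q⁻¹)⁻¹ r 1 := ⟨by simpa [one_div] using hpqr⟩
  calc ‖∫ x, a x * b x * c x ∂μ‖ₑ ≤ eLpNorm (fun x => a x * b x * c x) 1 μ := by
        rw [eLpNorm_one_eq_lintegral_enorm]; exact enorm_integral_le_lintegral_enorm _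
    _ ≤ 1 * eLpNorm (fun x => a x * b x) (p⁻¹ + q⁻¹)⁻¹ μ * eLpNorm c r μ :=
        eLpNorm_le_eLpNorm_mul_eLpNorm'_of_norm (ha.mul hb) hc (· * ·) 1
          (.of_forall fun _ => by simpa using norm_mul_le _ _)
    _ ≤ 1 * (1 * eLpNorm a p μ * eLpNorm b q μ) * eLpNorm c r μ := by
        gcongr
        exact eLpNorm_le_eLpNorm_mul_eLpNorm'_of_norm ha hb (· * ·) 1
          (.of_forall fun _ => by simpa using norm_mul_le _ _)
    _ = _ := by simp only [one_mul]

theorem enorm_integral_mul_le_lintegral_enorm_mul {K J : α → 𝕜} {B : ℝ≥0∞}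
    (hK : AEStronglyMeasurable K μ) (hJ : ∀ x, ‖J x‖ₑ ≤ B) :
    ‖∫ x, K x * J x ∂μ‖ₑ ≤ (∫⁻ x, ‖K x‖ₑ ∂μ) * B :=
  calc ‖∫ x, K x * J x ∂μ‖ₑ ≤ ∫⁻ x, ‖K x * J x‖ₑ ∂μ := enorm_integral_le_lintegral_enorm _
    _ ≤ ∫⁻ x, ‖K x‖ₑ * B ∂μ := by
        refine lintegral_mono fun x => ?_
        calc ‖K x * J x‖ₑ ≤ ‖K x‖ₑ * ‖J x‖ₑ := by
              simp only [enorm_eq_nnnorm]; exact_mod_cast nnnorm_mul_le _ _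
          _ ≤ ‖K x‖ₑ * B := by gcongr; exact hJ x
    _ = (∫⁻ x, ‖K x‖ₑ ∂μ) * B := lintegral_mul_const'' B hK.enorm

end Holder

section Correlation

variable {G 𝕜 : Type*} [AddCommGroup G] [MeasurableSpace G] [NormedRing 𝕜]

noncomputable def tripleCorr [NormedSpace ℝ 𝕜] (μ : Measure G) (f g h : G → 𝕜) (u : G × G) : 𝕜 :=
  ∫ z, f (-u.1 - z) * g (-u.2 - z) * h z ∂μ

variable [MeasurableAdd₂ G] [MeasurableNeg G] {μ : Measure G} [μ.IsAddLeftInvariant]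
  [μ.IsNegInvariant]

theorem enorm_tripleCorr_le [NormedSpace ℝ 𝕜] {p q r : ℝ≥0∞} (hpqr : 1 / p + 1 / q + 1 / r = 1)
    {f g h : G → 𝕜} (hf : AEStronglyMeasurable f μ) (hg : AEStronglyMeasurable g μ)
    (hh : AEStronglyMeasurable h μ) (u : G × G) :
    ‖tripleCorr μ f g h u‖ₑ ≤ eLpNorm f p μ * eLpNorm g q μ * eLpNorm h r μ := by
  have hf' := Measure.measurePreserving_sub_left μ (-u.1)
  have hg' := Measure.measurePreserving_sub_left μ (-u.2)
  rw [← eLpNorm_comp_measurePreserving hf hf', ← eLpNorm_comp_measurePreserving hg hg']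
  exact enorm_integral_mul_mul_le hpqr (hf.comp_measurePreserving hf')
    (hg.comp_measurePreserving hg') hh

variable [SFinite μ]

variable (μ) in
theorem measurePreserving_neg_sub_diag :
    MeasurePreserving (fun x : (G × G) × G => ((-x.1.1 - x.2, -x.1.2 - x.2), x.2))
      ((μ.prod μ).prod μ) ((μ.prod μ).prod μ) := by
  have hfiber (z : G) : MeasurePreserving (fun u : G × G => (-u.1 - z, -u.2 - z))
      (μ.prod μ) (μ.prod μ) := by
    simp_rw [neg_sub_comm _ z]
    exact (Measure.measurePreserving_sub_left μ (-z)).prod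
      (Measure.measurePreserving_sub_left μ (-z))
  have hskew := (MeasurePreserving.id μ).skew_product
    (g := fun z (u : G × G) => (-u.1 - z, -u.2 - z)) (by fun_prop)
    (.of_forall fun z => (hfiber z).map_eq)
  exact Measure.measurePreserving_swap.comp (hskew.comp Measure.measurePreserving_swap)

theorem integrable_tripleCorr_integrand {f g h : G → 𝕜} (hf : Integrable f μ) (hg : Integrable g μ)
    (hh : Integrable h μ) :
    Integrable (fun x : (G × G) × G => f (-x.1.1 - x.2) * g (-x.1.2 - x.2) * h x.2)
      ((μ.prod μ).prod μ) :=
  ((measurePreserving_neg_sub_diag μ).integrable_comp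
    ((hf.mul_prod hg).mul_prod hh).aestronglyMeasurable).2 ((hf.mul_prod hg).mul_prod hh)

theorem integrable_tripleCorr [NormedSpace ℝ 𝕜] {f g h : G → 𝕜} (hf : Integrable f μ)
    (hg : Integrable g μ) (hh : Integrable h μ) : Integrable (tripleCorr μ f g h) (μ.prod μ) :=
  (integrable_tripleCorr_integrand hf hg hh).integral_prod_left

end Correlation

section Phase

variable {V : Type*} [NormedAddCommGroup V] [InnerProductSpace ℝ V]

noncomputable def expInner (x ξ : V) : ℂ :=
  Complex.exp (Complex.I * ((⟪x, ξ⟫ : ℝ) : ℂ))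

theorem norm_expInner (x ξ : V) : ‖expInner x ξ‖ = 1 := by
  rw [expInner, mul_comm]
  exact Complex.norm_exp_ofReal_mul_I _

theorem expInner_add_left (x y ξ : V) : expInner (x + y) ξ = expInner x ξ * expInner y ξ := by
  simp only [expInner, inner_add_left, Complex.ofReal_add, mul_add, Complex.exp_add]

theorem expInner_add_right (x ξ η : V) : expInner x (ξ + η) = expInner x ξ * expInner x η := by
  simp only [expInner, inner_add_right, Complex.ofReal_add, mul_add, Complex.exp_add]

theorem expInner_neg_left (x ξ : V) :
    expInner (-x) ξ = Complex.exp (-(Complex.I * ((⟪x, ξ⟫ : ℝ) : ℂ))) := by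
  simp only [expInner, inner_neg_left, Complex.ofReal_neg, mul_neg]

@[fun_prop]
theorem Continuous.expInner {α : Type*} [TopologicalSpace α] {f g : α → V} (hf : Continuous f)
    (hg : Continuous g) : Continuous fun a => expInner (f a) (g a) := by
  unfold _root_.expInner
  fun_prop

end Phase

section Fourier

variable {d : ℕ}

local notation "E" => EuclideanSpace ℝ (Fin d)

theorem FT_eq_integral_expInner (f : E → ℂ) (ξ : E) : FT f ξ = ∫ x, expInner (-x) ξ * f x := by
  simp only [FT, expInner_neg_left]

theorem integral_expInner_mul_comp_neg_sub (f : E → ℂ) (ξ z : E) :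
    ∫ t, expInner t ξ * f (-t - z) = expInner (-z) ξ * FT f ξ := by
  rw [FT_eq_integral_expInner, ← integral_const_mul, ← integral_sub_left_eq_self _ volume (-z)]
  congr 1 with t
  rw [sub_eq_add_neg, expInner_add_left, show -(-z + -t) - z = t by abel, mul_assoc]

theorem integral_expInner_mul_tripleCorr {f g h : E → ℂ} (hf : Integrable f) (hg : Integrable g)
    (hh : Integrable h) (w : E × E) :
    ∫ u : E × E, expInner u.1 w.1 * expInner u.2 w.2 * tripleCorr volume f g h u =
      FT f w.1 * FT g w.2 * FT h (w.1 + w.2) := by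
  have hint : Integrable (Function.uncurry fun (u : E × E) (z : E) =>
      expInner u.1 w.1 * expInner u.2 w.2 * (f (-u.1 - z) * g (-u.2 - z) * h z))
      ((volume : Measure (E × E)).prod volume) :=
    (integrable_tripleCorr_integrand hf hg hh).bdd_mul (c := 1)
      (by fun_prop : Continuous fun x : (E × E) × E =>
        expInner x.1.1 w.1 * expInner x.1.2 w.2).aestronglyMeasurable
      (.of_forall fun x => by simp [norm_expInner])
  have hfiber (z : E) : ∫ u : E × E,
      expInner u.1 w.1 * expInner u.2 w.2 * (f (-u.1 - z) * g (-u.2 - z) * h z) =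
        FT f w.1 * FT g w.2 * (expInner (-z) (w.1 + w.2) * h z) := by
    calc _ = (∫ u : E × E, (expInner u.1 w.1 * f (-u.1 - z)) *
          (expInner u.2 w.2 * g (-u.2 - z))) * h z := by
          rw [← integral_mul_const]; congr 1 with u; ring
      _ = _ := by
          rw [Measure.volume_eq_prod, integral_prod_mul (fun t => expInner t w.1 * f (-t - z))
            (fun t => expInner t w.2 * g (-t - z)), integral_expInner_mul_comp_neg_sub,
            integral_expInner_mul_comp_neg_sub, expInner_add_right]
          ring
  calc _ = ∫ u : E × E, ∫ z,
        expInner u.1 w.1 * expInner u.2 w.2 * (f (-u.1 - z) * g (-u.2 - z) * h z) := by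
        simp_rw [tripleCorr, integral_const_mul]
    _ = ∫ z, ∫ u : E × E,
        expInner u.1 w.1 * expInner u.2 w.2 * (f (-u.1 - z) * g (-u.2 - z) * h z) :=
        integral_integral_swap hint
    _ = ∫ z, FT f w.1 * FT g w.2 * (expInner (-z) (w.1 + w.2) * h z) := by simp_rw [hfiber]
    _ = _ := by rw [integral_const_mul, ← FT_eq_integral_expInner]

noncomputable def multiplierKernel (m : E × E → ℂ) (u : E × E) : ℂ :=
  ∫ w, m w * expInner u.1 w.1 * expInner u.2 w.2

theorem aestronglyMeasurable_multiplierKernel {m : E × E → ℂ} (hm : AEStronglyMeasurable m) :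
    AEStronglyMeasurable (multiplierKernel m) := by
  have : AEStronglyMeasurable (fun x : (E × E) × (E × E) =>
      m x.2 * expInner x.1.1 x.2.1 * expInner x.1.2 x.2.2) (volume.prod volume) :=
    (hm.comp_snd.mul (by fun_prop : Continuous fun x : (E × E) × (E × E) =>
      expInner x.1.1 x.2.1).aestronglyMeasurable).mul
      (by fun_prop : Continuous fun x : (E × E) × (E × E) =>
        expInner x.1.2 x.2.2).aestronglyMeasurable
  exact this.integral_prod_right'

theorem integral_mul_FT_eq_integral_multiplierKernel_mul {m : E × E → ℂ} (hm : Integrable m)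
    {f g h : E → ℂ} (hf : Integrable f) (hg : Integrable g) (hh : Integrable h) :
    ∫ w, m w * FT f w.1 * FT g w.2 * FT h (w.1 + w.2) =
      ∫ u, multiplierKernel m u * tripleCorr volume f g h u := by
  have hint : Integrable (Function.uncurry fun (w u : E × E) =>
      expInner u.1 w.1 * expInner u.2 w.2 * (m w * tripleCorr volume f g h u))
      ((volume : Measure (E × E)).prod volume) :=
    (hm.mul_prod (integrable_tripleCorr hf hg hh)).bdd_mul (c := 1)
      (by fun_prop : Continuous fun x : (E × E) × (E × E) =>
        expInner x.2.1 x.1.1 * expInner x.2.2 x.1.2).aestronglyMeasurable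
      (.of_forall fun x => by simp [norm_expInner])
  calc _ = ∫ w, ∫ u, expInner u.1 w.1 * expInner u.2 w.2 * (m w * tripleCorr volume f g h u) := by
        congr 1 with w
        rw [mul_assoc, mul_assoc, ← mul_assoc (FT f w.1),
          ← integral_expInner_mul_tripleCorr hf hg hh w, ← integral_const_mul]
        congr 1 with u
        ring
    _ = ∫ u, ∫ w, expInner u.1 w.1 * expInner u.2 w.2 * (m w * tripleCorr volume f g h u) :=
        integral_integral_swap hint
    _ = _ := by
        congr 1 with u
        rw [multiplierKernel, ← integral_mul_const]
        congr 1 with w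
        ring

end Fourier

theorem stmt_7_general (d : ℕ) :
    ∃ C : ℝ, 0 < C ∧
      ∀ (m : EuclideanSpace ℝ (Fin d) × EuclideanSpace ℝ (Fin d) → ℂ) (A : ℝ),
        Integrable m volume →
        (∫⁻ z : EuclideanSpace ℝ (Fin d) × EuclideanSpace ℝ (Fin d),
            (‖∫ w : EuclideanSpace ℝ (Fin d) × EuclideanSpace ℝ (Fin d),
                m w * Complex.exp (Complex.I * ((⟪z.1, w.1⟫ : ℝ) : ℂ)) *
                  Complex.exp (Complex.I * ((⟪z.2, w.2⟫ : ℝ) : ℂ))‖₊ : ℝ≥0∞)) ≤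
          ENNReal.ofReal A →
        ∀ p q r : ℝ≥0∞, 1 ≤ p → 1 ≤ q → 1 ≤ r → 1 / p + 1 / q + 1 / r = 1 →
        ∀ f g h : SchwartzMap (EuclideanSpace ℝ (Fin d)) ℂ,
          ENNReal.ofReal
              (‖(∫ w : EuclideanSpace ℝ (Fin d) × EuclideanSpace ℝ (Fin d),
                  m w * FT (fun y => f y) w.1 * FT (fun y => g y) w.2 *
                    FT (fun y => h y) (w.1 + w.2))‖) ≤
            ENNReal.ofReal (C * A) * eLpNorm (fun y => f y) p volume *
              eLpNorm (fun y => g y) q volume * eLpNorm (fun y => h y) r volume := by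
  refine ⟨1, one_pos, fun m A hm hK p q r _ _ _ hpqr f g h => ?_⟩
  rw [one_mul, ofReal_norm,
    integral_mul_FT_eq_integral_multiplierKernel_mul hm f.integrable g.integrable h.integrable]
  calc _ ≤ (∫⁻ u, ‖multiplierKernel m u‖ₑ) *
        (eLpNorm f p volume * eLpNorm g q volume * eLpNorm h r volume) :=
        enorm_integral_mul_le_lintegral_enorm_mul (aestronglyMeasurable_multiplierKernel hm.1)
          (enorm_tripleCorr_le hpqr f.continuous.aestronglyMeasurable
            g.continuous.aestronglyMeasurable h.continuous.aestronglyMeasurable)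
    _ ≤ ENNReal.ofReal A * (eLpNorm f p volume * eLpNorm g q volume * eLpNorm h r volume) := by
        gcongr
        exact hK -- `hK` is this bound with `multiplierKernel` and `expInner` unfolded
    _ = _ := by rw [← mul_assoc, ← mul_assoc]

/-- Lemma 7.1 (first part): trilinear multiplier estimate.  If the inverse Fourier
transform `K` of the multiplier `m` has `L¹` norm at most `A`, then the trilinear
form associated to `m` satisfies a Hölder-type bound. -/
theorem stmt_7 (d : ℕ) (hd : 1 ≤ d) :
    ∃ C : ℝ, 0 < C ∧
      ∀ (m : EuclideanSpace ℝ (Fin d) × EuclideanSpace ℝ (Fin d) → ℂ) (A : ℝ),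
        Integrable m volume →
        (∫⁻ z : EuclideanSpace ℝ (Fin d) × EuclideanSpace ℝ (Fin d),
            (‖∫ w : EuclideanSpace ℝ (Fin d) × EuclideanSpace ℝ (Fin d),
                m w * Complex.exp (Complex.I * ((⟪z.1, w.1⟫ : ℝ) : ℂ)) *
                  Complex.exp (Complex.I * ((⟪z.2, w.2⟫ : ℝ) : ℂ))‖₊ : ℝ≥0∞)) ≤
          ENNReal.ofReal A →
        ∀ p q r : ℝ≥0∞, 1 ≤ p → 1 ≤ q → 1 ≤ r → 1 / p + 1 / q + 1 / r = 1 →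
        ∀ f g h : SchwartzMap (EuclideanSpace ℝ (Fin d)) ℂ,
          ENNReal.ofReal
              (‖(∫ w : EuclideanSpace ℝ (Fin d) × EuclideanSpace ℝ (Fin d),
                  m w * FT (fun y => f y) w.1 * FT (fun y => g y) w.2 *
                    FT (fun y => h y) (w.1 + w.2))‖) ≤
            ENNReal.ofReal (C * A) * eLpNorm (fun y => f y) p volume *
              eLpNorm (fun y => g y) q volume * eLpNorm (fun y => h y) r volume :=
  stmt_7_general d
end

section
/- Let 1 < α < 2. There is a constant C depending only on α such that for every measurable g : ℝ³ → ℂ with g ∈ L²(ℝ³) and with x ↦ ‖x‖·g(x) in L²(ℝ³), one has ‖g‖_{L^{6/(7−2α)}(ℝ³)} ≤ C · ‖ ‖x‖·g ‖_{L²(ℝ³)}^{2−α} · ‖g‖_{L²(ℝ³)}^{α−1}. -/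
/-!
Split `g` at the sphere of radius `R`. Inside the ball, Hölder's inequality against the indicator
of the ball gives `‖g‖_p ≤ |B_R|^{1/r} ‖g‖_2 ∼ R^{d/r} ‖g‖_2`, where `1/p = 1/r + 1/2`. Outside,
write `g = |x|⁻¹ · (|x| g)`; since `r > d`, `|x|⁻¹ ∈ L^r(|x| > R)` with norm `∼ R^{d/r - 1}`, so
`‖g‖_p ≲ R^{d/r - 1} ‖|x| g‖_2`. Choosing `R = ‖|x| g‖_2 / ‖g‖_2` balances the two terms.
For `d = 3`, `p = 6/(7-2α)` one gets `r = 3/(2-α)` and `d/r = 2 - α`.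
-/

open MeasureTheory Metric Set Module
open scoped ENNReal NNReal

namespace ENNReal

theorem div_rpow_mul_right {a b : ℝ≥0∞} (ha : a ≠ 0) (hb : b ≠ 0) (hb' : b ≠ ∞) (s : ℝ) :
    (a / b) ^ s * b = a ^ s * b ^ (1 - s) := by
  rw [div_eq_mul_inv, mul_rpow_of_ne_zero ha (ENNReal.inv_ne_zero.2 hb'), inv_rpow, ← rpow_neg,
    mul_assoc, sub_eq_neg_add, rpow_add _ _ hb hb', rpow_one]

theorem div_rpow_sub_one_mul_left {a b : ℝ≥0∞} (ha : a ≠ 0) (ha' : a ≠ ∞) (hb' : b ≠ ∞) (s : ℝ) :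
    (a / b) ^ (s - 1) * a = a ^ s * b ^ (1 - s) := by
  rw [div_eq_mul_inv, mul_rpow_of_ne_zero ha (ENNReal.inv_ne_zero.2 hb'), inv_rpow, ← rpow_neg,
    neg_sub, mul_right_comm, rpow_sub _ _ ha ha', rpow_one, ENNReal.div_mul_cancel ha ha']

theorem HolderTriple.toReal_inv_eq {p q : ℝ≥0∞} {r : ℝ} (hr : 0 < r) (hp : p ≠ 0)
    [HolderTriple (.ofReal r) q p] : p.toReal⁻¹ = r⁻¹ + q.toReal⁻¹ := by
  have hq : q ≠ 0 := (hp.bot_lt.trans_le (HolderTriple.le q (.ofReal r) p)).ne'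
  rw [← toReal_inv, HolderTriple.inv_eq (.ofReal r) q p,
    toReal_add (by simpa using hr) (by simpa using hq), toReal_inv, toReal_inv, toReal_ofReal hr.le]

end ENNReal

theorem pow_smul_indicator_Ioi_rpow_neg_ae_eq {n : ℕ} (hn : n ≠ 0) (r R : ℝ) :
    (fun y : ℝ => y ^ (n - 1) • (Ioi R).indicator (fun t => t ^ (-r)) y)
      =ᵐ[volume.restrict (Ioi 0)] (Ioi R).indicator (fun t => t ^ ((n : ℝ) - 1 - r)) := by
  filter_upwards [ae_restrict_mem measurableSet_Ioi] with y (hy : 0 < y)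
  by_cases hyR : y ∈ Ioi R
  · rw [indicator_of_mem hyR, indicator_of_mem hyR, smul_eq_mul, ← Real.rpow_natCast,
      ← Real.rpow_add hy, Nat.cast_sub (Nat.one_le_iff_ne_zero.2 hn), Nat.cast_one]
    ring_nf
  · simp [indicator_of_notMem hyR]

theorem indicator_compl_closedBall_zero_comp_norm {E M : Type*} [SeminormedAddGroup E] [Zero M]
    (g : ℝ → M) (R : ℝ) :
    (closedBall (0 : E) R)ᶜ.indicator (fun x => g ‖x‖) = fun x => (Ioi R).indicator g ‖x‖ := by
  ext x
  by_cases hx : R < ‖x‖ <;> simp [indicator, hx]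

variable {E : Type*} [NormedAddCommGroup E] [NormedSpace ℝ E] [FiniteDimensional ℝ E]
  [MeasurableSpace E] [BorelSpace E] (μ : Measure E) [μ.IsAddHaarMeasure]

section Tail

variable [Nontrivial E] {r R : ℝ}

theorem integrableOn_compl_closedBall_norm_rpow_neg (hr : finrank ℝ E < r) (hR : 0 < R) :
    IntegrableOn (fun x : E => ‖x‖ ^ (-r)) (closedBall 0 R)ᶜ μ := by
  rw [← integrable_indicator_iff measurableSet_closedBall.compl,
    indicator_compl_closedBall_zero_comp_norm (fun t => t ^ (-r)), integrable_fun_norm_addHaar,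
    IntegrableOn,
    integrable_congr (pow_smul_indicator_Ioi_rpow_neg_ae_eq finrank_pos.ne' r R),
    integrable_indicator_iff measurableSet_Ioi, IntegrableOn,
    Measure.restrict_restrict measurableSet_Ioi, Ioi_inter_Ioi, max_eq_left hR.le]
  exact integrableOn_Ioi_rpow_of_lt (by linarith) hR

theorem integral_compl_closedBall_norm_rpow_neg (hr : finrank ℝ E < r) (hR : 0 < R) :
    ∫ x in (closedBall 0 R)ᶜ, ‖x‖ ^ (-r) ∂μ
      = finrank ℝ E * μ.real (ball 0 1) / (r - finrank ℝ E) * R ^ ((finrank ℝ E : ℝ) - r) := by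
  rw [← integral_indicator measurableSet_closedBall.compl,
    indicator_compl_closedBall_zero_comp_norm (fun t => t ^ (-r)), integral_fun_norm_addHaar,
    integral_congr_ae (pow_smul_indicator_Ioi_rpow_neg_ae_eq finrank_pos.ne' r R),
    integral_indicator measurableSet_Ioi, Measure.restrict_restrict measurableSet_Ioi,
    Ioi_inter_Ioi, max_eq_left hR.le, integral_Ioi_rpow_of_lt (by linarith) hR, nsmul_eq_mul,
    smul_eq_mul, show (finrank ℝ E : ℝ) - 1 - r + 1 = finrank ℝ E - r by ring,
    neg_div, ← div_neg, neg_sub]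
  ring

theorem eLpNorm_inv_norm_restrict_compl_closedBall (hr : finrank ℝ E < r) (hR : 0 < R) :
    eLpNorm (fun x : E => ‖x‖⁻¹) (.ofReal r) (μ.restrict (closedBall 0 R)ᶜ)
      = ENNReal.ofReal (finrank ℝ E * μ.real (ball 0 1) / (r - finrank ℝ E)) ^ r⁻¹
          * ENNReal.ofReal R ^ (finrank ℝ E / r - 1) := by
  have hr0 : 0 < r := lt_of_le_of_lt (Nat.cast_nonneg _) hr
  have hpow (x : E) : ‖‖x‖⁻¹‖ₑ ^ r = ENNReal.ofReal (‖x‖ ^ (-r)) := by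
    rw [Real.enorm_of_nonneg (by positivity), ENNReal.ofReal_rpow_of_nonneg (by positivity) hr0.le,
      Real.inv_rpow (norm_nonneg x), Real.rpow_neg (norm_nonneg x)]
  rw [eLpNorm_eq_lintegral_rpow_enorm_toReal (by simpa using hr0) ENNReal.ofReal_ne_top,
    ENNReal.toReal_ofReal hr0.le, one_div]
  simp_rw [hpow]
  rw [← ofReal_integral_eq_lintegral_ofReal (integrableOn_compl_closedBall_norm_rpow_neg μ hr hR)
      (.of_forall fun x => by positivity), integral_compl_closedBall_norm_rpow_neg μ hr hR,
    ENNReal.ofReal_mul (div_nonneg (by positivity) (by linarith)),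
    ← ENNReal.ofReal_rpow_of_pos hR, ENNReal.mul_rpow_of_nonneg _ _ (by positivity),
    ← ENNReal.rpow_mul]
  congr 2
  field_simp

end Tail

section Split

variable {F : Type*} [NormedAddCommGroup F]

theorem ae_eq_zero_of_norm_smul_ae_eq_zero [Nontrivial E] [NormedSpace ℝ F] {f : E → F}
    (hf : (fun x => ‖x‖ • f x) =ᵐ[μ] 0) : f =ᵐ[μ] 0 := by
  filter_upwards [hf, compl_mem_ae_iff.2 (measure_singleton (μ := μ) 0)] with x hx hx0
  simpa [norm_eq_zero.not.2 hx0] using hx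

variable {p q : ℝ≥0∞} {r : ℝ} [ENNReal.HolderTriple (.ofReal r) q p]

theorem eLpNorm_restrict_closedBall_le (hp : p ≠ 0) (hr : 0 < r) {R : ℝ} (hR : 0 ≤ R)
    {f : E → F} (hf : AEStronglyMeasurable f μ) :
    eLpNorm f p (μ.restrict (closedBall 0 R))
      ≤ μ (ball 0 1) ^ r⁻¹ * ENNReal.ofReal R ^ (finrank ℝ E / r) * eLpNorm f q μ := by
  have hexp : p.toReal⁻¹ - q.toReal⁻¹ = r⁻¹ := by
    rw [ENNReal.HolderTriple.toReal_inv_eq (q := q) hr hp]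
    ring
  calc eLpNorm f p (μ.restrict (closedBall 0 R))
      ≤ eLpNorm f q (μ.restrict (closedBall 0 R)) * μ (closedBall 0 R) ^ r⁻¹ := by
        simpa [hexp] using eLpNorm_le_eLpNorm_mul_rpow_measure_univ
          (ENNReal.HolderTriple.le q (.ofReal r) p) hf.restrict
    _ ≤ eLpNorm f q μ * (ENNReal.ofReal R ^ finrank ℝ E * μ (ball 0 1)) ^ r⁻¹ := by
        rw [Measure.addHaar_closedBall μ 0 hR, ENNReal.ofReal_pow hR]
        gcongr
        exact Measure.restrict_le_self
    _ = _ := by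
        rw [← ENNReal.rpow_natCast, ENNReal.mul_rpow_of_nonneg _ _ (by positivity),
          ← ENNReal.rpow_mul, div_eq_mul_inv]
        ring

variable [Nontrivial E] [NormedSpace ℝ F]

theorem eLpNorm_restrict_compl_closedBall_le (hr : finrank ℝ E < r) {R : ℝ} (hR : 0 < R)
    {f : E → F} (hf : AEStronglyMeasurable f μ) :
    eLpNorm f p (μ.restrict (closedBall 0 R)ᶜ)
      ≤ ENNReal.ofReal (finrank ℝ E * μ.real (ball 0 1) / (r - finrank ℝ E)) ^ r⁻¹
          * ENNReal.ofReal R ^ (finrank ℝ E / r - 1) * eLpNorm (fun x => ‖x‖ • f x) q μ := by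
  have hweight :
      f =ᵐ[μ.restrict (closedBall 0 R)ᶜ] (fun x : E => ‖x‖⁻¹) • fun x => ‖x‖ • f x := by
    filter_upwards [ae_restrict_mem measurableSet_closedBall.compl] with x hx
    have hx0 : ‖x‖ ≠ 0 := by
      simp only [mem_compl_iff, mem_closedBall_zero_iff, not_le] at hx
      exact (hR.trans hx).ne'
    simp [smul_smul, inv_mul_cancel₀ hx0]
  calc eLpNorm f p (μ.restrict (closedBall 0 R)ᶜ)
      ≤ eLpNorm (fun x : E => ‖x‖⁻¹) (.ofReal r) (μ.restrict (closedBall 0 R)ᶜ)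
          * eLpNorm (fun x => ‖x‖ • f x) q (μ.restrict (closedBall 0 R)ᶜ) := by
        rw [eLpNorm_congr_ae hweight]
        exact eLpNorm_smul_le_mul_eLpNorm (by fun_prop) (by fun_prop)
    _ ≤ _ := by
        rw [eLpNorm_inv_norm_restrict_compl_closedBall μ hr hR]
        gcongr
        exact Measure.restrict_le_self

theorem eLpNorm_le_rpow_mul_eLpNorm_add_rpow_mul_eLpNorm_norm_smul (hp : 1 ≤ p)
    (hr : finrank ℝ E < r) {R : ℝ} (hR : 0 < R) {f : E → F} (hf : AEStronglyMeasurable f μ) :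
    eLpNorm f p μ
      ≤ μ (ball 0 1) ^ r⁻¹ * ENNReal.ofReal R ^ (finrank ℝ E / r) * eLpNorm f q μ
        + ENNReal.ofReal (finrank ℝ E * μ.real (ball 0 1) / (r - finrank ℝ E)) ^ r⁻¹
          * ENNReal.ofReal R ^ (finrank ℝ E / r - 1) * eLpNorm (fun x => ‖x‖ • f x) q μ := by
  have hr0 : 0 < r := lt_of_le_of_lt (Nat.cast_nonneg _) hr
  calc eLpNorm f p μ
      = eLpNorm ((closedBall 0 R).indicator f + (closedBall 0 R)ᶜ.indicator f) p μ := by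
        rw [indicator_self_add_compl]
    _ ≤ eLpNorm f p (μ.restrict (closedBall 0 R))
          + eLpNorm f p (μ.restrict (closedBall 0 R)ᶜ) := by
        rw [← eLpNorm_indicator_eq_eLpNorm_restrict measurableSet_closedBall,
          ← eLpNorm_indicator_eq_eLpNorm_restrict measurableSet_closedBall.compl]
        exact eLpNorm_add_le (hf.indicator measurableSet_closedBall)
          (hf.indicator measurableSet_closedBall.compl) hp
    _ ≤ _ := add_le_add (eLpNorm_restrict_closedBall_le μ (one_pos.trans_le hp).ne' hr0 hR.le hf)
        (eLpNorm_restrict_compl_closedBall_le μ hr hR hf)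

theorem exists_eLpNorm_le_mul_eLpNorm_norm_smul_rpow_mul_eLpNorm_rpow (hp : 1 ≤ p)
    (hr : finrank ℝ E < r) :
    ∃ C : ℝ≥0, 0 < C ∧ ∀ f : E → F, MemLp f q μ → MemLp (fun x => ‖x‖ • f x) q μ →
      eLpNorm f p μ ≤ C * eLpNorm (fun x => ‖x‖ • f x) q μ ^ (finrank ℝ E / r)
        * eLpNorm f q μ ^ (1 - finrank ℝ E / r) := by
  set K := μ (ball 0 1) ^ r⁻¹
    + ENNReal.ofReal (finrank ℝ E * μ.real (ball 0 1) / (r - finrank ℝ E)) ^ r⁻¹ with hK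
  have hr0 : 0 < r := lt_of_le_of_lt (Nat.cast_nonneg _) hr
  have hK0 : K ≠ 0 := fun h => (ENNReal.rpow_pos (measure_ball_pos μ 0 one_pos)
    measure_ball_lt_top.ne).ne' (add_eq_zero.1 h).1
  have hKtop : K ≠ ∞ := ENNReal.add_ne_top.2
    ⟨ENNReal.rpow_ne_top_of_nonneg (by positivity) measure_ball_lt_top.ne,
      ENNReal.rpow_ne_top_of_nonneg (by positivity) ENNReal.ofReal_ne_top⟩
  refine ⟨K.toNNReal, ENNReal.toNNReal_pos hK0 hKtop, fun f hf hwf => ?_⟩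
  by_cases hf0 : f =ᵐ[μ] 0
  · simp [eLpNorm_congr_ae hf0]
  have hq0 : q ≠ 0 :=
    (zero_lt_one.trans_le (hp.trans (ENNReal.HolderTriple.le q (.ofReal r) p))).ne'
  set A := eLpNorm (fun x => ‖x‖ • f x) q μ
  set B := eLpNorm f q μ
  have hA0 : A ≠ 0 := fun h =>
    hf0 (ae_eq_zero_of_norm_smul_ae_eq_zero μ ((eLpNorm_eq_zero_iff hwf.1 hq0).1 h))
  have hB0 : B ≠ 0 := fun h => hf0 ((eLpNorm_eq_zero_iff hf.1 hq0).1 h)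
  have hAB : A / B ≠ ∞ := ENNReal.div_ne_top hwf.eLpNorm_ne_top hB0
  calc eLpNorm f p μ
      ≤ μ (ball 0 1) ^ r⁻¹ * (A / B) ^ (finrank ℝ E / r) * B
        + ENNReal.ofReal (finrank ℝ E * μ.real (ball 0 1) / (r - finrank ℝ E)) ^ r⁻¹
          * (A / B) ^ (finrank ℝ E / r - 1) * A := by
        rw [← ENNReal.ofReal_toReal hAB]
        exact eLpNorm_le_rpow_mul_eLpNorm_add_rpow_mul_eLpNorm_norm_smul μ hp hr
          (ENNReal.toReal_pos (ENNReal.div_pos hA0 hf.eLpNorm_ne_top).ne' hAB) hf.1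
    _ = K * A ^ (finrank ℝ E / r) * B ^ (1 - finrank ℝ E / r) := by
        rw [mul_assoc, mul_assoc, ENNReal.div_rpow_mul_right hA0 hB0 hf.eLpNorm_ne_top,
          ENNReal.div_rpow_sub_one_mul_left hA0 hwf.eLpNorm_ne_top hf.eLpNorm_ne_top, hK]
        ring
    _ = _ := by rw [ENNReal.coe_toNNReal hKtop]

end Split

/-- Weighted interpolation inequality: `‖g‖_{L^{6/(7-2α)}} ≤ C ‖|x|g‖₂^{2-α} ‖g‖₂^{α-1}`. -/
theorem stmt_10 (α : ℝ) (hα₁ : 1 < α) (hα₂ : α < 2) :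
    ∃ C : ℝ, 0 < C ∧
      ∀ g : EuclideanSpace ℝ (Fin 3) → ℂ, Measurable g →
        MemLp g 2 volume →
        MemLp (fun x => ((‖x‖ : ℝ) : ℂ) * g x) 2 volume →
        eLpNorm g (ENNReal.ofReal (6 / (7 - 2 * α))) volume ≤
          ENNReal.ofReal C *
            (eLpNorm (fun x => ((‖x‖ : ℝ) : ℂ) * g x) 2 volume) ^ (2 - α) *
              (eLpNorm g 2 volume) ^ (α - 1) := by
  have h2α : 0 < 2 - α := by linarith
  have : ENNReal.HolderTriple (.ofReal (3 / (2 - α))) 2 (.ofReal (6 / (7 - 2 * α))) := by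
    constructor
    rw [← ENNReal.ofReal_inv_of_pos (div_pos three_pos h2α),
      ← ENNReal.ofReal_inv_of_pos (div_pos (by norm_num) (by linarith)), ← ENNReal.ofReal_ofNat,
      ← ENNReal.ofReal_inv_of_pos two_pos, ← ENNReal.ofReal_add (by positivity) (by norm_num)]
    congr 1
    field_simp
    ring
  have hd : finrank ℝ (EuclideanSpace ℝ (Fin 3)) = 3 := finrank_euclideanSpace_fin
  obtain ⟨C, hC, hineq⟩ := exists_eLpNorm_le_mul_eLpNorm_norm_smul_rpow_mul_eLpNorm_rpow
    (volume : Measure (EuclideanSpace ℝ (Fin 3))) (F := ℂ) (p := .ofReal (6 / (7 - 2 * α)))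
    (q := 2) (r := 3 / (2 - α))
    (ENNReal.one_le_ofReal.2 ((one_le_div (by linarith)).2 (by linarith)))
    (by rw [hd, Nat.cast_ofNat, lt_div_iff₀ h2α]; linarith)
  refine ⟨C, hC, fun g _ hg hwg => ?_⟩
  have hs : (finrank ℝ (EuclideanSpace ℝ (Fin 3)) : ℝ) / (3 / (2 - α)) = 2 - α := by
    rw [hd, Nat.cast_ofNat]
    field_simp
  simpa [hs, show 1 - (2 - α) = α - 1 by ring] using hineq g hg hwg
end
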